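/- arXiv:2410.04767 — 4 statements merged into one kernel-verified Lean document; each statement's English description precedes it below -/
import Mathlib

section
/- For every real number q with 0 < q < 1, the infinite product ∏_{n=1}^∞ (1 - q^n) equals the two-sided sum ∑_{k∈ℤ} (-1)^k q^{(3k² - k)/2} (Euler's pentagonal number theorem). -/
/-!
Mathlib's `Pentagonal.tprod_one_sub_pow` derives the identity in any topological ring from the
recurrence `A k = 1 - x ^ (2k+3) - x ^ (3k+5) * A (k+1)` for
`A k = ∑ₙ x ^ ((k+1)n) ∏_{i ≤ n} (1 - x ^ (k+i+1))`, provided these series and products converge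
and the remainders `± x ^ ((k+1)(3k+4)/2) * A k` tend to zero. When `‖x‖ < 1`, the estimate
`‖∏ (1 + yᵢ)‖ ≤ exp (∑ ‖yᵢ‖)` gives `‖A k‖ ≤ exp (1 / (1 - ‖x‖)) / (1 - ‖x‖)` uniformly in `k`,
which yields all of these conditions. The paired sum is then regrouped over `ℤ`; for real `q` the
exponents `(3k² - k)/2` are the natural numbers `pentagonal k`, so the real powers are ordinary
powers.
-/

open Filter Topology

theorem natAbs_le_pentagonal (k : ℤ) : k.natAbs ≤ pentagonal k := by
  have h := two_mul_natCast_pentagonal k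
  zify
  rcases abs_choice k with hk | hk <;> rw [hk] <;> nlinarith [abs_nonneg k]

theorem norm_neg_one_pow_mul {R : Type*} [NormedRing R] [NormOneClass R] (n : ℕ) (a : R) :
    ‖(-1) ^ n * a‖ = ‖a‖ := by
  rcases neg_one_pow_eq_or R n with h | h <;> simp [h]

theorem Finset.norm_prod_one_add_le_exp {ι R : Type*} [NormedCommRing R] [NormOneClass R]
    (s : Finset ι) (f : ι → R) : ‖∏ i ∈ s, (1 + f i)‖ ≤ Real.exp (∑ i ∈ s, ‖f i‖) := by
  have h := s.norm_prod_one_add_sub_one_le f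
  calc ‖∏ i ∈ s, (1 + f i)‖ ≤ ‖∏ i ∈ s, (1 + f i) - 1‖ + ‖(1 : R)‖ := norm_le_norm_sub_add _ _
    _ ≤ Real.exp (∑ i ∈ s, ‖f i‖) := by rw [norm_one]; linarith

namespace Pentagonal

variable {R : Type*} [NormedCommRing R] [NormOneClass R] {x : R}

theorem norm_pow_mul_prod_one_sub_pow_le (hx : ‖x‖ < 1) (k n : ℕ) :
    ‖x ^ ((k + 1) * n) * ∏ i ∈ Finset.range (n + 1), (1 - x ^ (k + i + 1))‖ ≤
      Real.exp (1 - ‖x‖)⁻¹ * ‖x‖ ^ n := by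
  have hx0 := norm_nonneg x
  have hpow : ‖x ^ ((k + 1) * n)‖ ≤ ‖x‖ ^ n :=
    (norm_pow_le _ _).trans
      (pow_le_pow_of_le_one hx0 hx.le (Nat.le_mul_of_pos_left n k.succ_pos))
  have hprod : ‖∏ i ∈ Finset.range (n + 1), (1 - x ^ (k + i + 1))‖ ≤
      Real.exp (1 - ‖x‖)⁻¹ := by
    simp only [sub_eq_add_neg]
    refine (Finset.norm_prod_one_add_le_exp _ _).trans (Real.exp_le_exp.mpr ?_)
    calc ∑ i ∈ Finset.range (n + 1), ‖-x ^ (k + i + 1)‖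
        ≤ ∑ i ∈ Finset.range (n + 1), ‖x‖ ^ i := by
          refine Finset.sum_le_sum fun i _ ↦ ?_
          rw [norm_neg]
          exact (norm_pow_le _ _).trans (pow_le_pow_of_le_one hx0 hx.le (by omega))
      _ ≤ (1 - ‖x‖)⁻¹ := by
          have h := geom_sum_Ico_le_of_lt_one (m := 0) (n := n + 1) hx0 hx
          rwa [← Finset.range_eq_Ico, pow_zero, one_div] at h
  calc ‖x ^ ((k + 1) * n) * ∏ i ∈ Finset.range (n + 1), (1 - x ^ (k + i + 1))‖
      ≤ ‖x ^ ((k + 1) * n)‖ * ‖∏ i ∈ Finset.range (n + 1), (1 - x ^ (k + i + 1))‖ :=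
        norm_mul_le _ _
    _ ≤ ‖x‖ ^ n * Real.exp (1 - ‖x‖)⁻¹ := mul_le_mul hpow hprod (norm_nonneg _) (by positivity)
    _ = Real.exp (1 - ‖x‖)⁻¹ * ‖x‖ ^ n := mul_comm _ _

theorem summable_pow_mul_prod_one_sub_pow [CompleteSpace R] (hx : ‖x‖ < 1) (k : ℕ) :
    Summable fun n ↦ x ^ ((k + 1) * n) * ∏ i ∈ Finset.range (n + 1), (1 - x ^ (k + i + 1)) :=
  .of_norm_bounded ((summable_geometric_of_lt_one (norm_nonneg x) hx).mul_left _)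
    (norm_pow_mul_prod_one_sub_pow_le hx k)

theorem norm_tsum_pow_mul_prod_one_sub_pow_le (hx : ‖x‖ < 1) (k : ℕ) :
    ‖∑' n, x ^ ((k + 1) * n) * ∏ i ∈ Finset.range (n + 1), (1 - x ^ (k + i + 1))‖ ≤
      Real.exp (1 - ‖x‖)⁻¹ * (1 - ‖x‖)⁻¹ :=
  tsum_of_norm_bounded ((hasSum_geometric_of_lt_one (norm_nonneg x) hx).mul_left _)
    (norm_pow_mul_prod_one_sub_pow_le hx k)

theorem multipliable_one_sub_pow [CompleteSpace R] (hx : ‖x‖ < 1) (k : ℕ) :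
    Multipliable fun n ↦ 1 - x ^ (n + k + 1) := by
  simp only [sub_eq_add_neg]
  refine multipliable_one_add_of_summable
    (.of_nonneg_of_le (fun _ ↦ norm_nonneg _) (fun n ↦ ?_)
      (summable_geometric_of_lt_one (norm_nonneg x) hx))
  rw [norm_neg]
  exact (norm_pow_le _ _).trans (pow_le_pow_of_le_one (norm_nonneg x) hx.le (by omega))

theorem norm_pow_pentagonal_le (hx : ‖x‖ < 1) {k : ℤ} {n : ℕ} (hn : n ≤ k.natAbs) :
    ‖x ^ pentagonal k‖ ≤ ‖x‖ ^ n :=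
  (norm_pow_le _ _).trans
    (pow_le_pow_of_le_one (norm_nonneg x) hx.le (hn.trans (natAbs_le_pentagonal k)))

theorem summable_neg_one_pow_mul_pow_pentagonal_sub [CompleteSpace R] (hx : ‖x‖ < 1) :
    Summable fun k : ℕ ↦ (-1) ^ k * (x ^ pentagonal (-k) - x ^ pentagonal (k + 1)) := by
  refine .of_norm_bounded ((summable_geometric_of_lt_one (norm_nonneg x) hx).mul_left 2)
    fun k ↦ ?_
  calc ‖(-1) ^ k * (x ^ pentagonal (-k) - x ^ pentagonal (k + 1))‖
      = ‖x ^ pentagonal (-k) - x ^ pentagonal (k + 1)‖ := norm_neg_one_pow_mul _ _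
    _ ≤ ‖x ^ pentagonal (-k)‖ + ‖x ^ pentagonal (k + 1)‖ := norm_sub_le _ _
    _ ≤ ‖x‖ ^ k + ‖x‖ ^ k :=
        add_le_add (norm_pow_pentagonal_le hx (by omega)) (norm_pow_pentagonal_le hx (by omega))
    _ = 2 * ‖x‖ ^ k := (two_mul _).symm

theorem tendsto_pentagonal_remainder (hx : ‖x‖ < 1) :
    Tendsto (fun k ↦ (-1) ^ (k + 1) * x ^ ((k + 1) * (3 * k + 4) / 2) *
      ∑' n, x ^ ((k + 1) * n) * ∏ i ∈ Finset.range (n + 1), (1 - x ^ (k + i + 1)))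
      atTop (𝓝 0) := by
  refine squeeze_zero_norm (fun k ↦ ?_)
    ((tendsto_pow_atTop_nhds_zero_of_lt_one (norm_nonneg x) hx).mul_const
      (Real.exp (1 - ‖x‖)⁻¹ * (1 - ‖x‖)⁻¹) |>.trans (by rw [zero_mul]))
  set A := ∑' n, x ^ ((k + 1) * n) * ∏ i ∈ Finset.range (n + 1), (1 - x ^ (k + i + 1))
  have hexp : k ≤ (k + 1) * (3 * k + 4) / 2 := by
    rw [Nat.le_div_iff_mul_le two_pos]; nlinarith
  calc ‖(-1) ^ (k + 1) * x ^ ((k + 1) * (3 * k + 4) / 2) * A‖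
      ≤ ‖x ^ ((k + 1) * (3 * k + 4) / 2)‖ * ‖A‖ := by
        rw [mul_assoc, norm_neg_one_pow_mul]
        exact norm_mul_le _ _
    _ ≤ ‖x‖ ^ k * (Real.exp (1 - ‖x‖)⁻¹ * (1 - ‖x‖)⁻¹) :=
        mul_le_mul ((norm_pow_le _ _).trans (pow_le_pow_of_le_one (norm_nonneg x) hx.le hexp))
          (norm_tsum_pow_mul_prod_one_sub_pow_le hx k) (norm_nonneg _) (by positivity)

theorem tprod_one_sub_pow_of_norm_lt_one [CompleteSpace R] (hx : ‖x‖ < 1) :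
    ∏' n, (1 - x ^ (n + 1)) =
      ∑' k : ℕ, (-1) ^ k * (x ^ pentagonal (-k) - x ^ pentagonal (k + 1)) :=
  tprod_one_sub_pow (tendsto_pow_atTop_nhds_zero_of_norm_lt_one hx)
    (summable_pow_mul_prod_one_sub_pow hx) (multipliable_one_sub_pow hx)
    (summable_neg_one_pow_mul_pow_pentagonal_sub hx) (tendsto_pentagonal_remainder hx)

theorem tprod_one_sub_pow_eq_tsum_int {𝕜 : Type*} [NormedField 𝕜] [CompleteSpace 𝕜]
    {x : 𝕜} (hx : ‖x‖ < 1) :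
    ∏' n, (1 - x ^ (n + 1)) = ∑' k : ℤ, (-1) ^ k * x ^ pentagonal k := by
  have hsum : Summable fun k : ℤ ↦ (-1) ^ k * x ^ pentagonal k :=
    .of_norm_bounded
      ((summable_geometric_of_lt_one (norm_nonneg x) hx).comp_injective pentagonal_injective)
      fun k ↦ by simp
  rw [tprod_one_sub_pow_of_norm_lt_one hx,
    ← tsum_comp_neg (fun k : ℤ ↦ (-1) ^ k * x ^ pentagonal k),
    ← tsum_nat_add_neg_add_one (f := fun k ↦ (-1) ^ (-k) * x ^ pentagonal (-k))
      (hsum.comp_injective neg_injective)]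
  congr 1 with k
  simp only [neg_neg, zpow_neg, zpow_natCast, ← inv_pow, inv_neg_one,
    zpow_add₀ (neg_ne_zero.mpr one_ne_zero : (-1 : 𝕜) ≠ 0), zpow_one]
  ring

end Pentagonal

theorem euler_pentagonal (q : ℝ) (hq0 : 0 < q) (hq1 : q < 1) :
    (∏' n : ℕ, (1 - q ^ (n + 1))) =
      ∑' k : ℤ, (-1 : ℝ) ^ k * q ^ ((3 * (k : ℝ) ^ 2 - (k : ℝ)) / 2) := by
  have hq : ‖q‖ < 1 := by rw [Real.norm_eq_abs, abs_lt]; constructor <;> linarith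
  rw [Pentagonal.tprod_one_sub_pow_eq_tsum_int hq]
  congr 1 with k
  have h : 2 * (pentagonal k : ℝ) = k * (3 * k - 1) := by
    exact_mod_cast two_mul_natCast_pentagonal k
  rw [← Real.rpow_natCast]
  congr 2
  linarith
end

section
/- For complex numbers z and y with |z| < 1 and y ≠ 0, one has ∏_{n=1}^∞ (1 - z^{2n})(1 + z^{2n-1} y)(1 + z^{2n-1} y^{-1}) = ∑_{k∈ℤ} z^{k²} y^k (Jacobi triple product identity). -/
/-!
Cauchy's q-binomial theorem `∏_{j<2N} (1 + t q^j) = ∑_k q^(k choose 2) [2N k]_q t^k`, taken at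
`q = z²` and `t = y z^(1-2N)`, gives the finite triple product
`∏_{n<N} (1 + z^(2n+1) y) (1 + z^(2n+1) y⁻¹) = ∑_{|m| ≤ N} [2N N+m]_q z^(m²) y^m`.
Multiplying by `(q; q)_N`, the left side becomes the `N`-th partial product of the theorem and the
coefficient of `z^(m²) y^m` becomes `(q; q)_N (q; q)_2N / ((q; q)_(N+m) (q; q)_(N-m))`. These
coefficients tend to `1` and are bounded uniformly in `N` and `m`, because the partial products
`(q; q)_n` converge to the nonzero limit `(q; q)_∞`; dominated convergence (Tannery's theorem)
then identifies the limits of both sides.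
-/

open Filter Finset Topology

section GaussianBinomial

variable {R : Type*}

/-- `(q; q)_n` -/
def qPochhammer [CommRing R] (q : R) (n : ℕ) : R := ∏ i ∈ range n, (1 - q ^ (i + 1))

def gaussBinom [CommSemiring R] (q : R) : ℕ → ℕ → R
  | _, 0 => 1
  | 0, _ + 1 => 0
  | m + 1, k + 1 => gaussBinom q m (k + 1) + q ^ (m - k) * gaussBinom q m k

@[simp]
lemma gaussBinom_zero_right [CommSemiring R] (q : R) (m : ℕ) : gaussBinom q m 0 = 1 := by
  cases m <;> rfl

lemma gaussBinom_succ_succ [CommSemiring R] (q : R) (m k : ℕ) :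
    gaussBinom q (m + 1) (k + 1) = gaussBinom q m (k + 1) + q ^ (m - k) * gaussBinom q m k :=
  rfl

lemma gaussBinom_eq_zero_of_lt [CommSemiring R] (q : R) {m k : ℕ} (h : m < k) :
    gaussBinom q m k = 0 := by
  induction m generalizing k with
  | zero => obtain ⟨k, rfl⟩ := Nat.exists_eq_add_one.2 h; rfl
  | succ m ih =>
    obtain ⟨k, rfl⟩ := Nat.exists_eq_add_one.2 (Nat.zero_lt_of_lt h)
    rw [gaussBinom_succ_succ, ih (by omega), ih (by omega), mul_zero, add_zero]

@[simp]
lemma gaussBinom_self [CommSemiring R] (q : R) (m : ℕ) : gaussBinom q m m = 1 := by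
  induction m with
  | zero => rfl
  | succ m ih => simp [gaussBinom_succ_succ, gaussBinom_eq_zero_of_lt q (Nat.lt_succ_self m), ih]

lemma qPochhammer_succ [CommRing R] (q : R) (n : ℕ) :
    qPochhammer q (n + 1) = qPochhammer q n * (1 - q ^ (n + 1)) :=
  prod_range_succ _ _

lemma gaussBinom_mul_qPochhammer_mul_qPochhammer [CommRing R] (q : R) {m k : ℕ} (h : k ≤ m) :
    gaussBinom q m k * qPochhammer q k * qPochhammer q (m - k) = qPochhammer q m := by
  induction m generalizing k with
  | zero => obtain rfl := Nat.le_zero.1 h; simp [qPochhammer]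
  | succ m ih =>
    rcases k with _ | k
    · simp [qPochhammer]
    rcases (Nat.succ_le_succ_iff.1 h).lt_or_eq with hk | rfl
    · obtain ⟨d, rfl⟩ := Nat.exists_eq_add_of_lt hk
      have h₁ := ih (k := k + 1) (by omega)
      have h₂ := ih (k := k) (by omega)
      rw [show k + d + 1 - (k + 1) = d by omega, qPochhammer_succ q k] at h₁
      rw [show k + d + 1 - k = d + 1 by omega, qPochhammer_succ q d] at h₂
      rw [gaussBinom_succ_succ, show k + d + 1 + 1 - (k + 1) = d + 1 by omega,
        show k + d + 1 - k = d + 1 by omega, qPochhammer_succ q (k + d + 1), qPochhammer_succ q d,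
        qPochhammer_succ q k]
      linear_combination (1 - q ^ (d + 1)) * h₁ + q ^ (d + 1) * (1 - q ^ (k + 1)) * h₂
    · simp [qPochhammer]

theorem prod_range_one_add_mul_pow [CommSemiring R] (q t : R) (m : ℕ) :
    ∏ j ∈ range m, (1 + t * q ^ j) =
      ∑ k ∈ range (m + 1), q ^ k.choose 2 * gaussBinom q m k * t ^ k := by
  induction m with
  | zero => simp
  | succ m ih =>
    set c : ℕ → R := fun k ↦ q ^ k.choose 2 * gaussBinom q m k * t ^ k
    have hstep : ∀ k ∈ range (m + 1),
        q ^ (k + 1).choose 2 * gaussBinom q (m + 1) (k + 1) * t ^ (k + 1) =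
          c (k + 1) + c k * (t * q ^ m) := by
      intro k hk
      have hexp : q ^ (k + 1).choose 2 * q ^ (m - k) = q ^ k.choose 2 * q ^ m := by
        have hchoose : (k + 1).choose 2 = k.choose 2 + k := by
          rw [Nat.choose_succ_succ', Nat.choose_one_right, add_comm]
        rw [← pow_add, ← pow_add, hchoose]
        congr 1
        have := mem_range.1 hk
        omega
      simp only [c, gaussBinom_succ_succ]
      rw [mul_add, add_mul, ← mul_assoc (q ^ _) (q ^ (m - k)), hexp]
      ring
    have hshift : ∑ k ∈ range (m + 1), c (k + 1) + c 0 = ∑ k ∈ range (m + 1), c k := by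
      rw [← sum_range_succ', sum_range_succ]
      simp [c, gaussBinom_eq_zero_of_lt q (Nat.lt_succ_self m)]
    rw [prod_range_succ, ih,
      sum_range_succ' (fun k ↦ q ^ k.choose 2 * gaussBinom q (m + 1) k * t ^ k),
      sum_congr rfl hstep, sum_add_distrib, ← sum_mul, ← hshift]
    simp only [Nat.choose_zero_succ, pow_zero, gaussBinom_zero_right, mul_one, c]
    ring

end GaussianBinomial

lemma sum_range_two_mul_add_one (n : ℕ) : ∑ i ∈ range n, (2 * i + 1) = n ^ 2 := by
  induction n with
  | zero => rfl
  | succ n ih => rw [sum_range_succ, ih]; ring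

lemma two_mul_choose_two_add_self (n : ℕ) : 2 * n.choose 2 + n = n ^ 2 := by
  induction n with
  | zero => rfl
  | succ n ih => rw [Nat.choose_succ_succ', Nat.choose_one_right]; nlinarith

lemma sum_Icc_neg_natCast_eq_sum_range {M : Type*} [AddCommMonoid M] (N : ℕ) (f : ℤ → M) :
    ∑ m ∈ Icc (-N : ℤ) N, f m = ∑ k ∈ range (2 * N + 1), f (k - N) := by
  refine sum_nbij' (fun m ↦ (N + m).toNat) (fun k ↦ (k : ℤ) - N) ?_ ?_ ?_ ?_ ?_ <;>
    intro a ha <;> simp only [mem_Icc, mem_range] at ha ⊢ <;> try omega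
  rw [show (((N + a).toNat : ℕ) : ℤ) - N = a by omega]

theorem finite_jacobi_triple_product {K : Type*} [Field K] {z y : K} (hz : z ≠ 0) (hy : y ≠ 0)
    (N : ℕ) :
    ∏ n ∈ range N, ((1 + z ^ (2 * n + 1) * y) * (1 + z ^ (2 * n + 1) * y⁻¹)) =
      ∑ m ∈ Icc (-N : ℤ) N, gaussBinom (z ^ 2) (2 * N) (N + m).toNat * z ^ (m ^ 2) * y ^ m := by
  set t := y * z / z ^ (2 * N)
  have hcauchy := prod_range_one_add_mul_pow (z ^ 2) t (2 * N)
  -- The factors `j = N + i` of Cauchy's product are `1 + z^(2i+1) y`; the factors `j = N - 1 - i`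
  -- are `y z^(-(2i+1)) (1 + z^(2i+1) y⁻¹)`.
  have hupper (i : ℕ) : 1 + t * (z ^ 2) ^ (N + i) = 1 + z ^ (2 * i + 1) * y := by
    simp only [t]; field_simp; ring
  have hlower (i : ℕ) (hi : i ∈ range N) :
      1 + t * (z ^ 2) ^ (N - 1 - i) = y / z ^ (2 * i + 1) * (1 + z ^ (2 * i + 1) * y⁻¹) := by
    obtain ⟨d, rfl⟩ : ∃ d, N = i + 1 + d := ⟨N - 1 - i, by have := mem_range.1 hi; omega⟩
    rw [show i + 1 + d - 1 - i = d by omega]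
    simp only [t]; field_simp; ring
  have hprod : ∏ j ∈ range (2 * N), (1 + t * (z ^ 2) ^ j) =
      y ^ N / z ^ (N ^ 2) *
        ∏ n ∈ range N, ((1 + z ^ (2 * n + 1) * y) * (1 + z ^ (2 * n + 1) * y⁻¹)) := by
    rw [two_mul, prod_range_add, ← prod_range_reflect, prod_congr rfl hlower,
      prod_congr rfl fun i _ ↦ hupper i, prod_mul_distrib, prod_mul_distrib, prod_div_distrib,
      prod_const, card_range, prod_pow_eq_pow_sum, sum_range_two_mul_add_one]
    ring
  have hterm (k : ℕ) : (z ^ 2) ^ k.choose 2 * gaussBinom (z ^ 2) (2 * N) k * t ^ k =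
      y ^ N / z ^ (N ^ 2) *
        (gaussBinom (z ^ 2) (2 * N) k * z ^ (((k : ℤ) - N) ^ 2) * y ^ ((k : ℤ) - N)) := by
    rw [show ((k : ℤ) - N) ^ 2 = ((k ^ 2 + N ^ 2 : ℕ) : ℤ) - ((2 * N * k : ℕ) : ℤ) by
        push_cast; ring,
      zpow_sub₀ hz, zpow_sub₀ hy, zpow_natCast, zpow_natCast, zpow_natCast, zpow_natCast,
      ← two_mul_choose_two_add_self k]
    simp only [t, div_pow, mul_pow, ← pow_mul]
    field_simp
    ring
  have hpre : y ^ N / z ^ (N ^ 2) ≠ 0 := div_ne_zero (pow_ne_zero _ hy) (pow_ne_zero _ hz)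
  rw [← mul_right_inj' hpre, ← hprod, hcauchy, mul_sum, sum_Icc_neg_natCast_eq_sum_range]
  refine sum_congr rfl fun k _ ↦ ?_
  rw [hterm, show ((N : ℤ) + (k - N)).toNat = k by omega]

def jacobiCoeff {R : Type*} [CommRing R] (q : R) (N : ℕ) (m : ℤ) : R :=
  if m.natAbs ≤ N then qPochhammer q N * gaussBinom q (2 * N) (N + m).toNat else 0

theorem tsum_jacobiCoeff_mul {K : Type*} [Field K] [TopologicalSpace K] {z y : K} (hz : z ≠ 0)
    (hy : y ≠ 0) (N : ℕ) :
    ∑' m : ℤ, jacobiCoeff (z ^ 2) N m * (z ^ (m ^ 2) * y ^ m) =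
      ∏ n ∈ range N, ((1 - (z ^ 2) ^ (n + 1)) *
        ((1 + z ^ (2 * n + 1) * y) * (1 + z ^ (2 * n + 1) * y⁻¹))) := by
  rw [tsum_eq_sum (s := Icc (-N : ℤ) N) fun m hm ↦ ?_, prod_mul_distrib,
    finite_jacobi_triple_product hz hy, ← qPochhammer, mul_sum]
  · refine sum_congr rfl fun m hm ↦ ?_
    rw [jacobiCoeff, if_pos (by rw [mem_Icc] at hm; omega)]
    ring
  · rw [jacobiCoeff, if_neg (by rw [mem_Icc] at hm; omega), zero_mul]

section Analytic

variable {𝕜 : Type*} [NormedField 𝕜] {q : 𝕜}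

lemma one_sub_pow_succ_ne_zero (hq : ‖q‖ < 1) (n : ℕ) : 1 - q ^ (n + 1) ≠ 0 := by
  intro h
  have hlt : ‖q ^ (n + 1)‖ < 1 := by
    rw [norm_pow]; exact pow_lt_one₀ (norm_nonneg q) hq n.succ_ne_zero
  rw [← sub_eq_zero.1 h, norm_one] at hlt
  exact hlt.false

lemma qPochhammer_ne_zero (hq : ‖q‖ < 1) (n : ℕ) : qPochhammer q n ≠ 0 :=
  prod_ne_zero_iff.2 fun i _ ↦ one_sub_pow_succ_ne_zero hq i

lemma jacobiCoeff_of_natAbs_le (hq : ‖q‖ < 1) {N : ℕ} {m : ℤ} (hm : m.natAbs ≤ N) :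
    jacobiCoeff q N m = qPochhammer q N * qPochhammer q (2 * N) *
      (qPochhammer q (N + m).toNat)⁻¹ * (qPochhammer q (N - m).toNat)⁻¹ := by
  have h := gaussBinom_mul_qPochhammer_mul_qPochhammer q (m := 2 * N) (k := (N + m).toNat)
    (by omega)
  rw [show 2 * N - (N + m).toNat = (N - m).toNat by omega] at h
  rw [jacobiCoeff, if_pos hm, ← h]
  field_simp [qPochhammer_ne_zero hq]

lemma summable_pow_sq_mul_pow {a : ℝ} (ha₀ : 0 ≤ a) (ha₁ : a < 1) (r : ℝ) :
    Summable fun n : ℕ ↦ a ^ (n ^ 2) * r ^ n := by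
  have hsmall : ∀ᶠ n : ℕ in atTop, ‖a ^ n * r‖ ≤ 1 / 2 := by
    have h := ((tendsto_pow_atTop_nhds_zero_of_lt_one ha₀ ha₁).mul_const r).norm
    rw [zero_mul, norm_zero] at h
    exact h.eventually (ge_mem_nhds (by norm_num))
  refine summable_geometric_two.of_norm_bounded_eventually_nat ?_
  filter_upwards [hsmall] with n hn
  rw [sq, pow_mul, ← mul_pow, norm_pow]
  exact pow_le_pow_left₀ (norm_nonneg _) hn n

lemma summable_norm_zpow_sq_mul_zpow {z : 𝕜} (hz : ‖z‖ < 1) (y : 𝕜) :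
    Summable fun m : ℤ ↦ ‖z ^ (m ^ 2) * y ^ m‖ := by
  refine Summable.of_nat_of_neg ?_ ?_
  · simpa [norm_mul, norm_pow, ← zpow_natCast] using
      summable_pow_sq_mul_pow (norm_nonneg z) hz ‖y‖
  · simpa [norm_mul, norm_pow, ← zpow_natCast] using
      summable_pow_sq_mul_pow (norm_nonneg z) hz ‖y⁻¹‖

variable [CompleteSpace 𝕜]

lemma multipliable_one_add_mul_pow (hq : ‖q‖ < 1) (c : 𝕜) :
    Multipliable fun n : ℕ ↦ 1 + c * q ^ n :=
  multipliable_one_add_of_summable <| by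
    simpa [norm_mul, norm_pow] using (summable_geometric_of_lt_one (norm_nonneg q) hq).mul_left ‖c‖

lemma tendsto_qPochhammer (hq : ‖q‖ < 1) :
    Tendsto (qPochhammer q) atTop (𝓝 (∏' n : ℕ, (1 - q ^ (n + 1)))) := by
  have h := (multipliable_one_add_mul_pow hq (-q)).tendsto_prod_tprod_nat
  simp only [neg_mul, ← pow_succ', ← sub_eq_add_neg] at h
  exact h

lemma tprod_one_sub_pow_succ_ne_zero (hq : ‖q‖ < 1) : ∏' n : ℕ, (1 - q ^ (n + 1)) ≠ 0 := by
  simp_rw [sub_eq_add_neg]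
  refine tprod_one_add_ne_zero_of_summable (fun n ↦ ?_) ?_
  · rw [← sub_eq_add_neg]; exact one_sub_pow_succ_ne_zero hq n
  · simpa [norm_pow, pow_succ] using
      (summable_geometric_of_lt_one (norm_nonneg q) hq).mul_right ‖q‖

lemma exists_norm_qPochhammer_le (hq : ‖q‖ < 1) :
    ∃ C, ∀ n, ‖qPochhammer q n‖ ≤ C ∧ ‖(qPochhammer q n)⁻¹‖ ≤ C := by
  obtain ⟨C₁, hC₁⟩ := (tendsto_qPochhammer hq).norm.bddAbove_range
  obtain ⟨C₂, hC₂⟩ :=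
    ((tendsto_qPochhammer hq).inv₀ (tprod_one_sub_pow_succ_ne_zero hq)).norm.bddAbove_range
  exact ⟨max C₁ C₂, fun n ↦ ⟨le_max_of_le_left (hC₁ ⟨n, rfl⟩),
    le_max_of_le_right (hC₂ ⟨n, rfl⟩)⟩⟩

lemma exists_norm_jacobiCoeff_le (hq : ‖q‖ < 1) : ∃ C, ∀ N m, ‖jacobiCoeff q N m‖ ≤ C := by
  obtain ⟨C, hC⟩ := exists_norm_qPochhammer_le hq
  have hC₀ : 0 ≤ C := (norm_nonneg _).trans (hC 0).1
  refine ⟨C * C * C * C, fun N m ↦ ?_⟩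
  by_cases hm : m.natAbs ≤ N
  · rw [jacobiCoeff_of_natAbs_le hq hm, norm_mul, norm_mul, norm_mul]
    gcongr
    exacts [(hC _).1, (hC _).1, (hC _).2, (hC _).2]
  · rw [jacobiCoeff, if_neg hm, norm_zero]
    positivity

lemma tendsto_jacobiCoeff (hq : ‖q‖ < 1) (m : ℤ) :
    Tendsto (jacobiCoeff q · m) atTop (𝓝 1) := by
  set L := ∏' n : ℕ, (1 - q ^ (n + 1))
  have hP : Tendsto (qPochhammer q) atTop (𝓝 L) := tendsto_qPochhammer hq
  have hL : L ≠ 0 := tprod_one_sub_pow_succ_ne_zero hq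
  have hshift (f : ℕ → ℕ) (hf : ∀ N, N ≤ f N + m.natAbs) : Tendsto f atTop atTop :=
    tendsto_atTop_atTop.2 fun b ↦ ⟨b + m.natAbs, fun N hN ↦ by have := hf N; omega⟩
  have h := ((hP.mul (hP.comp (hshift (2 * ·) fun N ↦ by omega))).mul
    ((hP.comp (hshift (fun N ↦ ((N : ℤ) + m).toNat) fun N ↦ by omega)).inv₀ hL)).mul
    ((hP.comp (hshift (fun N ↦ ((N : ℤ) - m).toNat) fun N ↦ by omega)).inv₀ hL)
  rw [show L * L * L⁻¹ * L⁻¹ = 1 by field_simp] at h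
  refine h.congr' ?_
  filter_upwards [eventually_ge_atTop m.natAbs] with N hN
  rw [jacobiCoeff_of_natAbs_le hq hN]
  rfl

end Analytic

theorem jacobi_triple_product (z y : ℂ) (hz : ‖z‖ < 1) (hy : y ≠ 0) :
    (∏' n : ℕ, ((1 - z ^ (2 * (n + 1))) * (1 + z ^ (2 * (n + 1) - 1) * y) *
        (1 + z ^ (2 * (n + 1) - 1) * y⁻¹))) =
      ∑' k : ℤ, z ^ (k ^ 2) * y ^ k := by
  rcases eq_or_ne z 0 with rfl | hz₀
  · rw [tsum_eq_single 0 fun k hk ↦ by simp [zero_zpow _ (pow_ne_zero 2 hk)]]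
    simp [show ∀ n : ℕ, 2 * (n + 1) - 1 ≠ 0 by omega]
  have hq : ‖z ^ 2‖ < 1 := by rw [norm_pow]; exact pow_lt_one₀ (norm_nonneg z) hz two_ne_zero
  have hfactor (n : ℕ) : (1 - z ^ (2 * (n + 1))) * (1 + z ^ (2 * (n + 1) - 1) * y) *
      (1 + z ^ (2 * (n + 1) - 1) * y⁻¹) =
        (1 - (z ^ 2) ^ (n + 1)) * ((1 + z ^ (2 * n + 1) * y) * (1 + z ^ (2 * n + 1) * y⁻¹)) := by
    rw [← pow_mul, show 2 * (n + 1) - 1 = 2 * n + 1 by omega, mul_assoc]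
  have hmul : Multipliable fun n : ℕ ↦
      (1 - (z ^ 2) ^ (n + 1)) * ((1 + z ^ (2 * n + 1) * y) * (1 + z ^ (2 * n + 1) * y⁻¹)) := by
    have h := multipliable_one_add_mul_pow hq
    exact ((h (-z ^ 2)).mul ((h (z * y)).mul (h (z * y⁻¹)))).congr fun n ↦ by ring
  obtain ⟨C, hC⟩ := exists_norm_jacobiCoeff_le hq
  have hlim := tendsto_tsum_of_dominated_convergence
    ((summable_norm_zpow_sq_mul_zpow hz y).mul_left C)
    (fun m ↦ by simpa using (tendsto_jacobiCoeff hq m).mul_const (z ^ (m ^ 2) * y ^ m))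
    (.of_forall fun N m ↦ (norm_mul_le _ _).trans <|
      mul_le_mul_of_nonneg_right (hC N m) (norm_nonneg _))
  rw [funext (tsum_jacobiCoeff_mul hz₀ hy)] at hlim
  simp_rw [hfactor]
  exact tendsto_nhds_unique hmul.tendsto_prod_tprod_nat hlim
end

section
/- The equation sin(πb) + (3√3/8)·b = 0 has exactly three solutions b in [0, ∞): b = 0, b = 4/3, and exactly one solution in the open interval (4/3, 5/3); moreover there are no solutions with b > 5/3. -/
/-!
On `(1, 2)` the sine term `sin (π b)` is negative, so `b ↦ sin (π b) + (3√3/8) b` is strictly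
convex on `[1, 2]` and has at most two zeros there. One is `4/3`; a second lies between `3/2` and `5/3`, where
the function changes sign. Off `[1, 5/3)` there are no zeros besides `0`: on `(0, 1]` both terms
are nonnegative and the linear one positive, and from `5/3` on the linear term exceeds `1`.
-/

open Real Set

lemma StrictConvexOn.eq_or_eq_of_apply_eq {s : Set ℝ} {f : ℝ → ℝ} (hf : StrictConvexOn ℝ s f)
    {a b y r : ℝ} (hab : a < b) (ha : a ∈ s) (hb : b ∈ s) (hy : y ∈ s)
    (hfa : f a = r) (hfb : f b = r) (hfy : f y = r) : y = a ∨ y = b := by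
  have lt_of_between : ∀ {u v w : ℝ}, u ∈ s → w ∈ s → u < v → v < w → f v < max (f u) (f w) :=
    fun hu hw huv hvw => hf.lt_on_openSegment hu hw (huv.trans hvw).ne
      ((openSegment_eq_Ioo (huv.trans hvw)).symm ▸ ⟨huv, hvw⟩)
  rcases lt_trichotomy y a with hya | rfl | hay
  · simpa [hfa, hfb, hfy] using lt_of_between hy hb hya hab
  · exact .inl rfl
  rcases lt_trichotomy y b with hyb | rfl | hby
  · simpa [hfa, hfb, hfy] using lt_of_between ha hb hay hyb
  · exact .inr rfl
  · simpa [hfa, hfb, hfy] using lt_of_between ha hy hab hby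

lemma deriv2_sin_pi_mul_add (c : ℝ) :
    deriv^[2] (fun b => sin (π * b) + c * b) = fun b => -(π ^ 2 * sin (π * b)) := by
  have hderiv : deriv (fun b => sin (π * b) + c * b) = fun b => π * cos (π * b) + c := by
    funext b
    exact (((hasDerivAt_id' b).const_mul π).sin.add ((hasDerivAt_id' b).const_mul c)).deriv.trans
      (by ring)
  funext b
  rw [Function.iterate_succ_apply, Function.iterate_one, hderiv]
  exact ((((hasDerivAt_id' b).const_mul π).cos.const_mul π).add_const c).deriv.trans (by ring)

lemma strictConvexOn_sin_pi_mul_add (c : ℝ) :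
    StrictConvexOn ℝ (Icc 1 2) (fun b => sin (π * b) + c * b) := by
  refine strictConvexOn_of_deriv2_pos (convex_Icc 1 2) (by fun_prop) fun b hb => ?_
  rw [interior_Icc] at hb
  have hsin : sin (π * b) < 0 := by
    rw [← sin_sub_two_pi]
    exact sin_neg_of_neg_of_neg_pi_lt (by nlinarith [hb.2, pi_pos]) (by nlinarith [hb.1, pi_pos])
  rw [deriv2_sin_pi_mul_add]
  nlinarith [pi_pos, sq_pos_of_pos pi_pos]

lemma sin_pi_mul_add_mul_pos_of_mem_Ioc {c b : ℝ} (hc : 0 < c) (hb : b ∈ Ioc 0 1) :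
    0 < sin (π * b) + c * b := by
  have : 0 ≤ sin (π * b) :=
    sin_nonneg_of_nonneg_of_le_pi (by nlinarith [hb.1, pi_pos]) (by nlinarith [hb.2, pi_pos])
  nlinarith [hb.1]

lemma sin_add_pos_of_one_lt {x y : ℝ} (hy : 1 < y) : 0 < sin x + y := by
  linarith [neg_one_le_sin x]

lemma sqrt_three_gt : (8 / 5 : ℝ) < √3 :=
  (lt_sqrt (by norm_num)).2 (by norm_num)

lemma sqrt_three_lt : √3 < 16 / 9 :=
  (sqrt_lt' (by norm_num)).2 (by norm_num)

lemma sin_pi_mul_four_thirds : sin (π * (4 / 3)) = -(√3 / 2) := by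
  rw [show π * (4 / 3) = π / 3 + π by ring, sin_add_pi, sin_pi_div_three]

lemma sin_pi_mul_five_thirds : sin (π * (5 / 3)) = -(√3 / 2) := by
  rw [show π * (5 / 3) = -(π / 3) + 2 * π by ring, sin_add_two_pi, sin_neg, sin_pi_div_three]

lemma sin_pi_mul_three_halves : sin (π * (3 / 2)) = -1 := by
  rw [show π * (3 / 2) = π / 2 + π by ring, sin_add_pi, sin_pi_div_two]

theorem three_roots (f : ℝ → ℝ)
    (hf : ∀ b, f b = Real.sin (Real.pi * b) + 3 * Real.sqrt 3 / 8 * b) :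
    f 0 = 0 ∧ f (4 / 3) = 0 ∧
      (∃! b, b ∈ Set.Ioo (4 / 3 : ℝ) (5 / 3) ∧ f b = 0) ∧
      ∀ b : ℝ, 0 ≤ b → f b = 0 →
        b = 0 ∨ b = 4 / 3 ∨ b ∈ Set.Ioo (4 / 3 : ℝ) (5 / 3) := by
  obtain rfl : f = fun b => sin (π * b) + 3 * √3 / 8 * b := funext hf
  have hconv := strictConvexOn_sin_pi_mul_add (3 * √3 / 8)
  have hzero : sin (π * (4 / 3)) + 3 * √3 / 8 * (4 / 3) = 0 := by
    rw [sin_pi_mul_four_thirds]; ring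
  obtain ⟨x, hx, hfx⟩ : ∃ x ∈ Ioo (3 / 2 : ℝ) (5 / 3), sin (π * x) + 3 * √3 / 8 * x = 0 :=
    intermediate_value_Ioo (by norm_num) (by fun_prop)
      ⟨by rw [sin_pi_mul_three_halves]; linarith [sqrt_three_lt],
        by rw [sin_pi_mul_five_thirds]; linarith [sqrt_three_gt]⟩
  have hroots : ∀ y ∈ Icc (1 : ℝ) 2, sin (π * y) + 3 * √3 / 8 * y = 0 → y = 4 / 3 ∨ y = x :=
    fun y hy hfy => hconv.eq_or_eq_of_apply_eq (by linarith [hx.1])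
      ⟨by norm_num, by norm_num⟩ ⟨by linarith [hx.1], by linarith [hx.2]⟩ hy hzero hfx hfy
  refine ⟨by simp, hzero, ⟨x, ⟨⟨by linarith [hx.1], hx.2⟩, hfx⟩, fun y ⟨hy, hfy⟩ => ?_⟩, ?_⟩
  · exact (hroots y ⟨by linarith [hy.1], by linarith [hy.2]⟩ hfy).resolve_left hy.1.ne'
  intro b hb hfb
  rcases hb.eq_or_lt with rfl | hb0
  · exact .inl rfl
  rcases le_or_gt b 1 with hb1 | hb1
  · exact absurd hfb (sin_pi_mul_add_mul_pos_of_mem_Ioc (by positivity) ⟨hb0, hb1⟩).ne'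
  rcases le_or_gt (5 / 3) b with hb53 | hb53
  · exact absurd hfb (sin_add_pos_of_one_lt (by nlinarith [sqrt_three_gt])).ne'
  rcases hroots b ⟨hb1.le, by linarith⟩ hfb with rfl | rfl
  · exact .inr (.inl rfl)
  · exact .inr (.inr ⟨by linarith [hx.1], hb53⟩)
end

section
/- There exists a unique real number x in the open interval (1/4, 2/3) satisfying √(36x + 3)/4 + sin(2π√(12x + 1)/3) = 0. -/
/-!
Substituting `t = √(12x + 1)`, which maps `(1/4, 2/3)` bijectively onto `(2, 3)`, turns the
equation into `f t = 0` for `f t = √3 t / 4 + sin (2πt/3)`. On `[2, 3]` the argument `2πt/3`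
stays in `[4π/3, 2π]`, where `sin` is strictly convex, so `f` is strictly convex there. Since
`f 2 = 0`, strict convexity leaves room for at most one further zero in `(2, 3]`, and one exists
by the intermediate value theorem because `f (9/4) < 0 < f 3`.
-/

open Real Set

section Convex

variable {𝕜 E F β : Type*} [Field 𝕜] [LinearOrder 𝕜] [AddCommGroup E] [AddCommGroup F]
  [Module 𝕜 E] [Module 𝕜 F] [AddCommMonoid β] [PartialOrder β] [SMul 𝕜 β]

theorem StrictConvexOn.comp_affineMap {f : F → β} (g : E →ᵃ[𝕜] F) (hg : Function.Injective g)
    {s : Set F} (hf : StrictConvexOn 𝕜 s f) : StrictConvexOn 𝕜 (g ⁻¹' s) (f ∘ g) :=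
  ⟨hf.1.affine_preimage _, fun x hx y hy hxy a b ha hb hab =>
    calc
      (f ∘ g) (a • x + b • y) = f (a • g x + b • g y) := by
        rw [Function.comp_apply, Convex.combo_affine_apply hab]
      _ < a • f (g x) + b • f (g y) := hf.2 hx hy (hg.ne hxy) ha hb hab⟩

end Convex

theorem StrictConvexOn.eq_of_apply_eq_of_lt {𝕜 : Type*} [Field 𝕜] [LinearOrder 𝕜]
    [IsStrictOrderedRing 𝕜] {s : Set 𝕜} {f : 𝕜 → 𝕜} (hf : StrictConvexOn 𝕜 s f) {a x y : 𝕜}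
    (ha : a ∈ s) (hx : x ∈ s) (hy : y ∈ s) (hax : a < x) (hay : a < y)
    (hfx : f x = f a) (hfy : f y = f a) : x = y := by
  wlog hxy : x ≤ y generalizing x y
  · exact (this hy hx hay hax hfy hfx (le_of_not_ge hxy)).symm
  refine hxy.eq_of_not_lt fun hlt => ?_
  have := hf.slope_strict_mono_adjacent ha hy hax hlt
  simp [hfx, hfy] at this

theorem ExistsUnique.of_bijOn {α β : Type*} {φ : α → β} {s : Set α} {t : Set β}
    {P : β → Prop} {Q : α → Prop} (hφ : BijOn φ s t) (hQ : ∀ x ∈ s, Q x ↔ P (φ x))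
    (hP : ∃! y, y ∈ t ∧ P y) : ∃! x, x ∈ s ∧ Q x := by
  obtain ⟨y, ⟨hy, hPy⟩, huniq⟩ := hP
  obtain ⟨x, hx, rfl⟩ := hφ.surjOn hy
  refine ⟨x, ⟨hx, (hQ x hx).2 hPy⟩, fun x' ⟨hx', hQx'⟩ => hφ.injOn hx' hx ?_⟩
  exact huniq _ ⟨hφ.mapsTo hx', (hQ x' hx').1 hQx'⟩

theorem strictConvexOn_sin_two_pi_mul_div_three :
    StrictConvexOn ℝ (Icc 2 3) fun t => sin (2 * π * t / 3) := by
  let g : ℝ →ᵃ[ℝ] ℝ := (2 * π / 3) • AffineMap.id ℝ ℝ + AffineMap.const ℝ ℝ (-π)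
  have hg : ∀ t, g t = 2 * π * t / 3 - π := fun t => by simp [g]; ring
  have hg_inj : Function.Injective g := fun s t h => by
    simpa [hg, pi_ne_zero] using h
  have hmaps : Icc 2 3 ⊆ g ⁻¹' Icc 0 π := fun t ⟨h2, h3⟩ => by
    simp only [mem_preimage, hg, mem_Icc]
    constructor <;> nlinarith [pi_pos]
  refine ((strictConcaveOn_sin_Icc.neg.comp_affineMap g hg_inj).subset hmaps
    (convex_Icc 2 3)).congr fun t _ => ?_
  simp [hg, sin_sub_pi]

noncomputable def backboneFun (t : ℝ) : ℝ := √3 * t / 4 + sin (2 * π * t / 3)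

theorem strictConvexOn_backboneFun : StrictConvexOn ℝ (Icc 2 3) backboneFun := by
  refine (((LinearMap.mul ℝ ℝ (√3 / 4)).convexOn (convex_Icc 2 3)).add_strictConvexOn
    strictConvexOn_sin_two_pi_mul_div_three).congr fun t _ => ?_
  simp only [backboneFun, Pi.add_apply, LinearMap.mul_apply']
  ring

theorem backboneFun_two : backboneFun 2 = 0 := by
  have h : 2 * π * 2 / 3 = π / 3 + π := by ring
  rw [backboneFun, h, sin_add_pi, sin_pi_div_three]
  ring

theorem backboneFun_nine_div_four_neg : backboneFun (9 / 4) < 0 := by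
  have h : 2 * π * (9 / 4) / 3 = π / 2 + π := by ring
  rw [backboneFun, h, sin_add_pi, sin_pi_div_two]
  nlinarith [sq_sqrt (show (0 : ℝ) ≤ 3 by norm_num), sqrt_nonneg 3]

theorem backboneFun_three_pos : 0 < backboneFun 3 := by
  have h : 2 * π * 3 / 3 = 2 * π := by ring
  rw [backboneFun, h, sin_two_pi]
  positivity

theorem existsUnique_backboneFun_eq_zero : ∃! t, t ∈ Ioo (2 : ℝ) 3 ∧ backboneFun t = 0 := by
  have hcont : ContinuousOn backboneFun (Icc (9 / 4) 3) := by unfold backboneFun; fun_prop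
  obtain ⟨t, ht, ht0⟩ := intermediate_value_Ioo (by norm_num) hcont
    ⟨backboneFun_nine_div_four_neg, backboneFun_three_pos⟩
  have ht' : t ∈ Ioo (2 : ℝ) 3 := ⟨by linarith [ht.1], ht.2⟩
  refine ⟨t, ⟨ht', ht0⟩, fun u ⟨hu, hu0⟩ => ?_⟩
  have h2 : (2 : ℝ) ∈ Icc 2 3 := ⟨le_rfl, by norm_num⟩
  exact strictConvexOn_backboneFun.eq_of_apply_eq_of_lt h2 (Ioo_subset_Icc_self hu)
    (Ioo_subset_Icc_self ht') hu.1 ht'.1 (hu0.trans backboneFun_two.symm)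
    (ht0.trans backboneFun_two.symm)

theorem bijOn_sqrt_twelve_mul_add_one :
    BijOn (fun x => √(12 * x + 1)) (Ioo (1 / 4) (2 / 3)) (Ioo 2 3) := by
  refine ⟨fun x ⟨h1, h2⟩ => ⟨?_, ?_⟩, fun x hx y hy hxy => ?_, fun t ⟨h2, h3⟩ => ?_⟩
  · rw [lt_sqrt (by norm_num)]; linarith
  · rw [sqrt_lt' (by norm_num)]; linarith
  · rw [sqrt_inj (by linarith [hx.1]) (by linarith [hy.1])] at hxy
    linarith
  · refine ⟨(t ^ 2 - 1) / 12, ⟨by nlinarith, by nlinarith⟩, ?_⟩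
    dsimp only
    rw [show 12 * ((t ^ 2 - 1) / 12) + 1 = t ^ 2 by ring, sqrt_sq (by linarith)]

theorem backboneFun_sqrt_twelve_mul_add_one (x : ℝ) :
    backboneFun √(12 * x + 1) = √(36 * x + 3) / 4 + sin (2 * π * √(12 * x + 1) / 3) := by
  rw [backboneFun, show 36 * x + 3 = 3 * (12 * x + 1) by ring, sqrt_mul (by norm_num),
    mul_div_assoc]

theorem backbone_exponent_exists_unique :
    ∃! x : ℝ, x ∈ Set.Ioo (1 / 4 : ℝ) (2 / 3) ∧
      Real.sqrt (36 * x + 3) / 4 + Real.sin (2 * Real.pi * Real.sqrt (12 * x + 1) / 3) = 0 :=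
  existsUnique_backboneFun_eq_zero.of_bijOn bijOn_sqrt_twelve_mul_add_one fun x _ => by
    rw [backboneFun_sqrt_twelve_mul_add_one]
end
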